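/- Let P_A and P_B be convex polygons (convex hulls of vertex lists in cyclic order) in ℝ². If no vertex of either polygon lies in the other polygon and no edge of P_A intersects any edge of P_B, then P_A and P_B are disjoint. -/

import Mathlib

/-!
Everything reduces to one planar fact: if a segment `[P, Q]` with endpoints outside a polygon
meets the polygon, it meets one of its edges. Indeed, in the plane there is a linear functional `φ`
whose kernel is the direction of `[P, Q]`. Following the cycle of vertices, `φ` takes on some edge
the value it takes at a common point; that point of the edge lies on the line `PQ` and in the
polygon, and since `P` and `Q` are outside the (convex) polygon, it lies between them.

Applied to the edges of `P_A` this shows that `P_A`'s edges avoid `P_B`. Applied to `P_A` and a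
chord `[p, q]` of `P_B` with `p, q ∉ P_A`, it shows that the chord avoids `P_A`, i.e. `P_B \ P_A`
is convex. As it contains the vertices of `P_B`, it contains `P_B`.
-/

open Set Module

variable {E : Type*} [AddCommGroup E] [Module ℝ E]

section CyclicSequence

variable {n : ℕ} [NeZero n]

open Fin.NatCast in
theorem Fin.forall_of_imp_add_one {p : Fin n → Prop} {a : Fin n} (ha : p a)
    (h : ∀ b, p b → p (b + 1)) (b : Fin n) : p b := by
  have hiter : ∀ k : ℕ, p (a + k) := by
    intro k
    induction k with
    | zero => simpa using ha
    | succ k ih => simpa [add_assoc] using h _ ih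
  simpa using hiter (b - a).val

theorem exists_mem_uIcc_of_mem_convexHull {f : Fin n → ℝ} {x : ℝ}
    (hx : x ∈ convexHull ℝ (range f)) : ∃ b, x ∈ uIcc (f b) (f (b + 1)) := by
  by_contra! h
  have hne : ∀ b, f b ≠ x := fun b hb => h b (hb ▸ left_mem_uIcc)
  rcases (hne 0).lt_or_gt with h0 | h0
  · have hlt : ∀ b, f b < x := Fin.forall_of_imp_add_one h0 fun b hb =>
      not_le.mp fun hle => h b (Icc_subset_uIcc ⟨hb.le, hle⟩)
    exact lt_irrefl x (convexHull_min (range_subset_iff.2 hlt) (convex_Iio x) hx)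
  · have hgt : ∀ b, x < f b := Fin.forall_of_imp_add_one h0 fun b hb =>
      not_le.mp fun hle => h b (Icc_subset_uIcc' ⟨hle, hb.le⟩)
    exact lt_irrefl x (convexHull_min (range_subset_iff.2 hgt) (convex_Ioi x) hx)

theorem exists_mem_segment_apply_eq_of_mem_convexHull (C : Fin n → E) (φ : E →ₗ[ℝ] ℝ)
    {w : E} (hw : w ∈ convexHull ℝ (range C)) :
    ∃ b, ∃ r ∈ segment ℝ (C b) (C (b + 1)), φ r = φ w := by
  have hφw : φ w ∈ convexHull ℝ (range (φ ∘ C)) := by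
    rw [range_comp, ← φ.image_convexHull]
    exact mem_image_of_mem φ hw
  obtain ⟨b, hb⟩ := exists_mem_uIcc_of_mem_convexHull hφw
  rw [← segment_eq_uIcc] at hb
  obtain ⟨r, hr, hφr⟩ := (image_segment ℝ φ.toAffineMap _ _).symm ▸ hb
  exact ⟨b, r, hr, hφr⟩

end CyclicSequence

theorem sub_mem_span_of_mem_segment {P Q w : E} (hw : w ∈ segment ℝ P Q) :
    w - P ∈ ℝ ∙ (Q - P) := by
  rw [segment_eq_image'] at hw
  obtain ⟨s, -, rfl⟩ := hw
  rw [add_sub_cancel_left]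
  exact Submodule.smul_mem _ s (Submodule.mem_span_singleton_self _)

theorem Convex.mem_segment_of_sub_mem_span {K : Set E} (hK : Convex ℝ K) {P Q w x : E}
    (hP : P ∉ K) (hQ : Q ∉ K) (hw : w ∈ K ∩ segment ℝ P Q) (hx : x ∈ K)
    (hxP : x - P ∈ ℝ ∙ (Q - P)) : x ∈ segment ℝ P Q := by
  set L : ℝ →ᵃ[ℝ] E := AffineMap.lineMap P Q
  have hL : (L ⁻¹' K).OrdConnected := (hK.affine_preimage L).ordConnected
  obtain ⟨t, ht⟩ := Submodule.mem_span_singleton.mp hxP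
  have hLt : L t = x := by simp [L, AffineMap.lineMap_apply, ht]
  obtain ⟨hwK, s, ⟨hs0, hs1⟩, rfl⟩ := (segment_eq_image_lineMap ℝ P Q) ▸ hw
  rw [segment_eq_image_lineMap]
  refine ⟨t, ⟨?_, ?_⟩, hLt⟩
  · by_contra! ht0
    exact hP (by simpa [L] using hL.out (hLt ▸ hx : L t ∈ K) hwK ⟨ht0.le, hs0⟩)
  · by_contra! ht1
    exact hQ (by simpa [L] using hL.out hwK (hLt ▸ hx : L t ∈ K) ⟨hs1, ht1.le⟩)

theorem exists_dual_ker_eq_span_singleton {K V : Type*} [Field K] [AddCommGroup V] [Module K V]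
    (hV : finrank K V = 2) {u : V} (hu : u ≠ 0) :
    ∃ φ : Dual K V, LinearMap.ker φ = K ∙ u := by
  have : FiniteDimensional K V := Module.finite_of_finrank_eq_succ hV
  have hlt : K ∙ u < ⊤ := by
    refine lt_top_iff_ne_top.2 fun h => ?_
    have := finrank_span_singleton (K := K) hu
    rw [h, finrank_top, hV] at this
    exact absurd this (by norm_num)
  obtain ⟨φ, hφ, hle⟩ := (K ∙ u).exists_le_ker_of_lt_top hlt
  refine ⟨φ, (Submodule.eq_of_le_of_finrank_eq hle ?_).symm⟩
  have := Module.Dual.finrank_ker_add_one_of_ne_zero hφ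
  rw [finrank_span_singleton hu]
  omega

theorem convexHull_inter_segment_eq_empty (hE : finrank ℝ E = 2) {n : ℕ} [NeZero n]
    (C : Fin n → E) {P Q : E}
    (hP : P ∉ convexHull ℝ (range C)) (hQ : Q ∉ convexHull ℝ (range C))
    (hedge : ∀ b, segment ℝ (C b) (C (b + 1)) ∩ segment ℝ P Q = ∅) :
    convexHull ℝ (range C) ∩ segment ℝ P Q = ∅ := by
  refine eq_empty_of_forall_notMem fun w ⟨hwC, hwPQ⟩ => ?_
  have hPQ : Q - P ≠ 0 := by
    intro h
    rw [sub_eq_zero.mp h, segment_same] at hwPQ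
    exact hP (mem_singleton_iff.mp hwPQ ▸ hwC)
  obtain ⟨φ, hφ⟩ := exists_dual_ker_eq_span_singleton hE hPQ
  obtain ⟨b, r, hr, hφr⟩ := exists_mem_segment_apply_eq_of_mem_convexHull C φ hwC
  have hrP : r - P ∈ ℝ ∙ (Q - P) := by
    have : r - w ∈ LinearMap.ker φ := by rw [LinearMap.mem_ker, map_sub, hφr, sub_self]
    rw [hφ] at this
    simpa using Submodule.add_mem _ this (sub_mem_span_of_mem_segment hwPQ)
  have hrC : r ∈ convexHull ℝ (range C) := (convex_convexHull ℝ _).segment_subset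
    (subset_convexHull ℝ _ (mem_range_self b))
    (subset_convexHull ℝ _ (mem_range_self (b + 1))) hr
  have hrPQ := (convex_convexHull ℝ _).mem_segment_of_sub_mem_span hP hQ ⟨hwC, hwPQ⟩ hrC hrP
  exact (eq_empty_iff_forall_notMem.mp (hedge b)) r ⟨hr, hrPQ⟩

theorem polygons_disjoint_of_vertices_edges {α β : ℕ} [NeZero α] [NeZero β]
    (A : Fin α → EuclideanSpace ℝ (Fin 2)) (B : Fin β → EuclideanSpace ℝ (Fin 2))
    (hvA : ∀ a, A a ∉ convexHull ℝ (Set.range B))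
    (hvB : ∀ b, B b ∉ convexHull ℝ (Set.range A))
    (hedges : ∀ a b, segment ℝ (A a) (A (a + 1)) ∩ segment ℝ (B b) (B (b + 1)) = ∅) :
    convexHull ℝ (Set.range A) ∩ convexHull ℝ (Set.range B) = ∅ := by
  have hE : finrank ℝ (EuclideanSpace ℝ (Fin 2)) = 2 := finrank_euclideanSpace_fin
  have hedgeA : ∀ a, segment ℝ (A a) (A (a + 1)) ∩ convexHull ℝ (range B) = ∅ := by
    intro a
    rw [inter_comm]
    exact convexHull_inter_segment_eq_empty hE B (hvA a) (hvA (a + 1)) fun b => by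
      rw [inter_comm]
      exact hedges a b
  have hconv : Convex ℝ (convexHull ℝ (range B) \ convexHull ℝ (range A)) := by
    refine convex_iff_segment_subset.2 fun p ⟨hpB, hpA⟩ q ⟨hqB, hqA⟩ => ?_
    have hseg := (convex_convexHull ℝ (range B)).segment_subset hpB hqB
    have hdisj := convexHull_inter_segment_eq_empty hE A hpA hqA fun a =>
      subset_eq_empty (inter_subset_inter_right _ hseg) (hedgeA a)
    exact fun r hr =>
      ⟨hseg hr, fun hrA => (eq_empty_iff_forall_notMem.mp hdisj) r ⟨hrA, hr⟩⟩
  have hBsub :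
      convexHull ℝ (range B) ⊆ convexHull ℝ (range B) \ convexHull ℝ (range A) := by
    refine convexHull_min (range_subset_iff.2 fun b => ⟨?_, hvB b⟩) hconv
    exact subset_convexHull ℝ _ (mem_range_self b)
  exact eq_empty_of_forall_notMem fun x ⟨hxA, hxB⟩ => (hBsub hxB).2 hxA
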